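/- In the setting of the previous statement (finite-horizon MDP with fixed policy h and value functions W_t), suppose there exist a time τ and a state s* ∈ S_τ reachable with positive probability such that h_τ(s*) is NOT a maximizer of a ↦ r_τ(s*, a) + E_{s'∼K_τ(s*,a)}[W_{τ+1}(s')], and τ is the largest such time. Then the policy g equal to h everywhere except g_τ(s*) ∈ argmax of this map strictly improves the expected reward-to-go from (τ, s*): its reward-to-go strictly exceeds that of h at (τ, s*). -/

import Mathlib

/-- Expected total reward-to-go of a (Markov, deterministic) policy `h`
in a finite-horizon MDP, with `n` remaining decision steps starting at time `t`. -/
def evalJ {S : ℕ → Type} [∀ t, Fintype (S t)] {A : Type}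
    (K : (t : ℕ) → S t → A → S (t + 1) → ℝ)
    (r : (t : ℕ) → S t → A → ℝ)
    (h : (t : ℕ) → S t → A) : (n : ℕ) → (t : ℕ) → S t → ℝ
  | 0, _, _ => 0
  | n + 1, t, s =>
      r t s (h t s) + ∑ s' : S (t + 1), K t s (h t s) s' * evalJ K r h n (t + 1) s'

/-!
Since `W` is the value of `h` itself, the deviation `g` collects the same continuation values
`W (τ + 1)` as `h` after time `τ`; at `(τ, s*)` it plays the maximizer `a*` of the one-step
lookahead, whose value strictly exceeds that of `h τ s*` because `h τ s*` is not a maximizer.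
-/

section evalJ

variable {S : ℕ → Type} [∀ t, Fintype (S t)] {A : Type}
  (K : (t : ℕ) → S t → A → S (t + 1) → ℝ) (r : (t : ℕ) → S t → A → ℝ)

theorem evalJ_congr_of_eq_from {g h : (t : ℕ) → S t → A} (n t : ℕ)
    (hgh : ∀ u, t ≤ u → ∀ s : S u, g u s = h u s) (s : S t) :
    evalJ K r g n t s = evalJ K r h n t s := by
  induction n generalizing t with
  | zero => rfl
  | succ n ih =>
    simp only [evalJ, hgh t le_rfl s,
      ih (t + 1) fun u hu => hgh u (Nat.le_of_succ_le hu)]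

theorem evalJ_succ_of_eq_after {g h : (t : ℕ) → S t → A} (n t : ℕ)
    (hgh : ∀ u, t < u → ∀ s : S u, g u s = h u s) (s : S t) :
    evalJ K r g (n + 1) t s
      = r t s (g t s) + ∑ s' : S (t + 1), K t s (g t s) s' * evalJ K r h n (t + 1) s' := by
  simp only [evalJ, evalJ_congr_of_eq_from K r n (t + 1) fun u hu => hgh u hu]

theorem eq_evalJ_of_backward_recursion {h : (t : ℕ) → S t → A} {W : (t : ℕ) → S t → ℝ} {T : ℕ}
    (hWend : ∀ s, W (T + 1) s = 0)
    (hWrec : ∀ t, t ≤ T → ∀ s, W t s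
      = r t s (h t s) + ∑ s' : S (t + 1), K t s (h t s) s' * W (t + 1) s')
    (n t : ℕ) (hnt : t + n = T + 1) (s : S t) :
    W t s = evalJ K r h n t s := by
  induction n generalizing t with
  | zero =>
    obtain rfl : t = T + 1 := hnt
    exact hWend s
  | succ n ih =>
    simp only [hWrec t (by omega) s, evalJ, ih (t + 1) (by omega)]

end evalJ

theorem stmt_8_general {S : ℕ → Type} [∀ t, Fintype (S t)] {A : Type}
    (T : ℕ)
    (K : (t : ℕ) → S t → A → S (t + 1) → ℝ)
    (r : (t : ℕ) → S t → A → ℝ)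
    (h : (t : ℕ) → S t → A)
    (W : (t : ℕ) → S t → ℝ)
    (hWend : ∀ s, W (T + 1) s = 0)
    (hWrec : ∀ t, t ≤ T → ∀ s, W t s
      = r t s (h t s) + ∑ s' : S (t + 1), K t s (h t s) s' * W (t + 1) s')
    (τ : ℕ) (hτ : τ ≤ T) (sstar : S τ)
    (hnot : ¬ ∀ a : A,
      r τ sstar a + ∑ s' : S (τ + 1), K τ sstar a s' * W (τ + 1) s'
        ≤ r τ sstar (h τ sstar)
          + ∑ s' : S (τ + 1), K τ sstar (h τ sstar) s' * W (τ + 1) s')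
    (astar : A)
    (hbest : ∀ a : A,
      r τ sstar a + ∑ s' : S (τ + 1), K τ sstar a s' * W (τ + 1) s'
        ≤ r τ sstar astar + ∑ s' : S (τ + 1), K τ sstar astar s' * W (τ + 1) s')
    (g : (t : ℕ) → S t → A)
    (hg1 : g τ sstar = astar)
    (hg2 : ∀ t, t ≠ τ → ∀ s : S t, g t s = h t s) :
    evalJ K r h (T + 1 - τ) τ sstar < evalJ K r g (T + 1 - τ) τ sstar := by
  have hW := eq_evalJ_of_backward_recursion K r hWend hWrec
  obtain ⟨a, ha⟩ := not_forall.mp hnot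
  have hsteps : T + 1 - τ = (T - τ) + 1 := by omega
  calc evalJ K r h (T + 1 - τ) τ sstar
      = r τ sstar (h τ sstar) + ∑ s', K τ sstar (h τ sstar) s' * W (τ + 1) s' := by
        rw [← hW _ τ (by omega), hWrec τ hτ]
    _ < r τ sstar a + ∑ s', K τ sstar a s' * W (τ + 1) s' := not_le.mp ha
    _ ≤ r τ sstar astar + ∑ s', K τ sstar astar s' * W (τ + 1) s' := hbest a
    _ = evalJ K r g (T + 1 - τ) τ sstar := by
        rw [hsteps, evalJ_succ_of_eq_after K r _ τ fun u hu => hg2 u hu.ne', hg1]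
        simp only [← hW (T - τ) (τ + 1) (by omega)]

/-- necessity / strict one-step improvement.  If the stage-wise argmax
condition fails at the latest time `τ` (at state `s*`), then the one-step deviation
`g` (equal to `h` except that it plays a maximizer `a*` at `(τ, s*)`) strictly
improves the expected reward-to-go from `(τ, s*)`. -/
theorem stmt_8 {S : ℕ → Type} [∀ t, Fintype (S t)] {A : Type} [Fintype A] [Nonempty A]
    (T : ℕ)
    (K : (t : ℕ) → S t → A → S (t + 1) → ℝ)
    (hK0 : ∀ t s a s', 0 ≤ K t s a s') (hK1 : ∀ t s a, ∑ s', K t s a s' = 1)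
    (r : (t : ℕ) → S t → A → ℝ)
    (h : (t : ℕ) → S t → A)
    (W : (t : ℕ) → S t → ℝ)
    (hWend : ∀ s, W (T + 1) s = 0)
    (hWrec : ∀ t, t ≤ T → ∀ s, W t s
      = r t s (h t s) + ∑ s' : S (t + 1), K t s (h t s) s' * W (t + 1) s')
    (τ : ℕ) (hτ : τ ≤ T) (sstar : S τ)
    (hlargest : ∀ t, τ < t → t ≤ T → ∀ s : S t, ∀ a : A,
      r t s a + ∑ s' : S (t + 1), K t s a s' * W (t + 1) s'
        ≤ r t s (h t s) + ∑ s' : S (t + 1), K t s (h t s) s' * W (t + 1) s')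
    (hnot : ¬ ∀ a : A,
      r τ sstar a + ∑ s' : S (τ + 1), K τ sstar a s' * W (τ + 1) s'
        ≤ r τ sstar (h τ sstar)
          + ∑ s' : S (τ + 1), K τ sstar (h τ sstar) s' * W (τ + 1) s')
    (astar : A)
    (hbest : ∀ a : A,
      r τ sstar a + ∑ s' : S (τ + 1), K τ sstar a s' * W (τ + 1) s'
        ≤ r τ sstar astar + ∑ s' : S (τ + 1), K τ sstar astar s' * W (τ + 1) s')
    (g : (t : ℕ) → S t → A)
    (hg1 : g τ sstar = astar)
    (hg2 : ∀ t, t ≠ τ → ∀ s : S t, g t s = h t s)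
    (hg3 : ∀ s : S τ, s ≠ sstar → g τ s = h τ s) :
    evalJ K r h (T + 1 - τ) τ sstar < evalJ K r g (T + 1 - τ) τ sstar :=
  stmt_8_general T K r h W hWend hWrec τ hτ sstar hnot astar hbest g hg1 hg2
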